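/- Direct sum bound: if there exists a rank-ρ_1-saturating [n_1,k_1]_{q^m/q} system and a rank-ρ_2-saturating [n_2,k_2]_{q^m/q} system, and ρ_1 + ρ_2 ≤ min{k_1+k_2, m}, then s_{q^m/q}(k_1+k_2, ρ_1+ρ_2) ≤ s_{q^m/q}(k_1,ρ_1) + s_{q^m/q}(k_2,ρ_2). More precisely, for any F_{q^m}-linear map f: F_{q^m}^{n_1} → F_{q^m}^{n_2}, the f-sum of the two systems is an [n_1+n_2, k_1+k_2]_{q^m/q} system that is rank-ρ-saturating for some ρ ≤ ρ_1 + ρ_2. -/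

import Mathlib

/-!
The covering bound is block elimination: to cover `v`, first cover its lower block with at most
`ρ₂` vectors of `U₂`, lift them into the `f`-sum, and cover what remains in the upper block with
at most `ρ₁` vectors of `U₁ × 0`.

For the bound on `s_{q^m/q}`, the direct sum of two optimal systems covers with radius
`ρ₁ + ρ₂`, so it remains to raise the exact covering radius of a system `Y` to any
`ρ ≤ min{k, m}` without increasing its dimension. The `F_q`-span `B ⊆ Y` of an `F_{q^m}`-basis
has radius at least `min{k, m}`: a vector whose coordinates are `F_q`-independent cannot be
covered by fewer vectors. Adjoin the vectors of `Y` to `B` one at a time. If adjoining `u` to `X`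
brings the radius from above `ρ` to at most `ρ`, write `u` as an `F_{q^m}`-combination of vectors
of `X` and remove the terms one by one: replacing `t` by `t + c • y` with `y ∈ X` changes the
radius of `X ⊔ ⟨t⟩` by at most one, so some `X ⊔ ⟨t⟩` has radius exactly `ρ`.
-/

open Matrix

/-- `U` covers with radius `r`: every vector of `F_{q^m}^k` lies in the `F_{q^m}`-span
of an `F_q`-subspace of `U` of `F_q`-dimension at most `r`. -/
def RkCovers (K : Type*) {L : Type*} [Field K] [Field L] [Algebra K L]
    {ι : Type*} (U : Submodule K (ι → L)) (r : ℕ) : Prop :=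
  ∀ v : ι → L, ∃ S : Submodule K (ι → L), S ≤ U ∧ Module.finrank K S ≤ r ∧
    v ∈ Submodule.span L (S : Set (ι → L))

/-- `U` is rank-`ρ`-saturating: it covers with radius `ρ` and `ρ` is minimal. -/
def IsRankSat (K : Type*) {L : Type*} [Field K] [Field L] [Algebra K L]
    {ι : Type*} (U : Submodule K (ι → L)) (ρ : ℕ) : Prop :=
  RkCovers K U ρ ∧ ∀ r < ρ, ¬ RkCovers K U r

/-- `s_{q^m/q}(k, ρ)`: the minimal `F_q`-dimension of a rank-`ρ`-saturating
`[n,k]_{q^m/q}` system in `F_{q^m}^k`. -/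
noncomputable def sMin (K L : Type*) [Field K] [Field L] [Algebra K L] (k ρ : ℕ) : ℕ :=
  sInf {n : ℕ | ∃ U : Submodule K (Fin k → L),
    Module.finrank K U = n ∧ Submodule.span L (U : Set (Fin k → L)) = ⊤ ∧
      IsRankSat K U ρ}

open Submodule Module

section Covering

variable {K L ι : Type*} [Field K] [Field L] [Algebra K L] {U : Submodule K (ι → L)} {r : ℕ}

theorem span_eq_top_of_le {R S M : Type*} [Semiring R] [Semiring S] [AddCommMonoid M]
    [Module R M] [Module S M] {X Y : Submodule R M} (hX : span S (X : Set M) = ⊤)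
    (hXY : X ≤ Y) : span S (Y : Set M) = ⊤ :=
  top_unique (hX ▸ span_mono hXY)

theorem RkCovers.span_eq_top (h : RkCovers K U r) : span L (U : Set (ι → L)) = ⊤ :=
  eq_top_iff'.2 fun v => by
    obtain ⟨S, hSU, -, hv⟩ := h v
    exact span_mono hSU hv

theorem rkCovers_finrank_of_span_eq_top (h : span L (U : Set (ι → L)) = ⊤) :
    RkCovers K U (finrank K U) :=
  fun _ => ⟨U, le_rfl, le_rfl, h ▸ mem_top⟩

theorem rkCovers_iff_exists_finset [Finite ι] [Finite L] :
    RkCovers K U r ↔ ∀ v, ∃ s : Finset (ι → L),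
      s.card ≤ r ∧ ↑s ⊆ (U : Set (ι → L)) ∧ v ∈ span L (s : Set (ι → L)) := by
  refine forall_congr' fun v => ⟨?_, ?_⟩
  · rintro ⟨S, hSU, hSr, hv⟩
    obtain ⟨t, htS, htspan, hli⟩ := exists_linearIndependent K (S : Set (ι → L))
    have : Fintype t := Fintype.ofFinite t
    refine ⟨t.toFinset, ?_, by simpa using htS.trans hSU, ?_⟩
    · rw [← finrank_span_set_eq_card hli, htspan, span_eq]
      exact hSr
    · rwa [Set.coe_toFinset, ← span_span_of_tower K, htspan, span_eq]
  · rintro ⟨s, hsr, hsU, hv⟩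
    exact ⟨span K s, span_le.2 hsU, (finrank_span_finset_le_card s).trans hsr,
      by rwa [span_span_of_tower]⟩

theorem RkCovers.map {α β : Type*} [Finite α] [Finite β] [Finite L] {U : Submodule K (α → L)}
    (h : RkCovers K U r) {e : (α → L) →ₗ[L] (β → L)} (he : Function.Surjective e) :
    RkCovers K (U.map (e.restrictScalars K)) r := by
  classical
  rw [rkCovers_iff_exists_finset] at h ⊢
  intro v
  obtain ⟨v, rfl⟩ := he v
  obtain ⟨s, hsr, hsU, hv⟩ := h v
  refine ⟨s.image e, Finset.card_image_le.trans hsr, ?_, ?_⟩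
  · rw [Finset.coe_image]
    exact Set.image_subset_iff.2 fun x hx => mem_map_of_mem (f := e.restrictScalars K) (hsU hx)
  · rw [Finset.coe_image]
    exact apply_mem_span_image_of_mem_span e hv

theorem RkCovers.add_one_of_forall_exists_sub_smul_mem [Finite ι] [Finite L]
    {W : Submodule K (ι → L)} (h : RkCovers K U r) {y : ι → L} (hy : y ∈ W)
    (hUW : ∀ g ∈ U, ∃ c : L, g - c • y ∈ W) : RkCovers K W (r + 1) := by
  classical
  rw [rkCovers_iff_exists_finset] at h ⊢
  choose! c hc using hUW
  intro v
  obtain ⟨s, hsr, hsU, hv⟩ := h v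
  refine ⟨insert y (s.image fun g => g - c g • y),
    (Finset.card_insert_le _ _).trans (by grw [Finset.card_image_le, hsr]), ?_, ?_⟩
  · simp only [Finset.coe_insert, Finset.coe_image, Set.insert_subset_iff,
      Set.image_subset_iff]
    exact ⟨hy, fun g hg => hc g (hsU hg)⟩
  · refine span_le.2 (fun g hg => ?_) hv
    rw [← sub_add_cancel g (c g • y)]
    exact add_mem (subset_span (Finset.mem_insert_of_mem (Finset.mem_image_of_mem _ hg)))
      (smul_mem _ _ (subset_span (Finset.mem_insert_self _ _)))

theorem RkCovers.of_sumElim {α β : Type*} [Finite α] [Finite β] [Finite L]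
    {U₁ : Submodule K (α → L)} {U₂ : Submodule K (β → L)} {U : Submodule K (α ⊕ β → L)}
    {r₁ r₂ : ℕ} (h₁ : RkCovers K U₁ r₁) (h₂ : RkCovers K U₂ r₂)
    (hU₁ : ∀ x ∈ U₁, Sum.elim x 0 ∈ U) (hU₂ : ∀ y ∈ U₂, ∃ x, Sum.elim x y ∈ U) :
    RkCovers K U (r₁ + r₂) := by
  classical
  rw [rkCovers_iff_exists_finset] at h₁ h₂ ⊢
  choose! lift hlift using hU₂
  intro v
  obtain ⟨s₂, hs₂r, hs₂U, hv₂⟩ := h₂ (v ∘ Sum.inr)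
  obtain ⟨f, -, hf⟩ := mem_span_finset.1 hv₂
  set w := ∑ y ∈ s₂, f y • Sum.elim (lift y) y
  obtain ⟨s₁, hs₁r, hs₁U, hv₁⟩ := h₁ ((v - w) ∘ Sum.inl)
  let ext₀ : (α → L) →ₗ[L] (α ⊕ β → L) :=
    (LinearEquiv.sumArrowLequivProdArrow α β L L).symm.toLinearMap ∘ₗ LinearMap.inl L _ _
  have hvw : ext₀ ((v - w) ∘ Sum.inl) = v - w := by
    ext (i | i)
    · rfl
    · have hi := congrFun hf i
      simp only [Finset.sum_apply, Pi.smul_apply, smul_eq_mul, Function.comp_apply] at hi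
      simp [ext₀, w, Finset.sum_apply, hi]
  refine ⟨s₁.image ext₀ ∪ s₂.image (fun y => Sum.elim (lift y) y),
    (Finset.card_union_le _ _).trans
      (by grw [Finset.card_image_le, Finset.card_image_le, hs₁r, hs₂r]), ?_, ?_⟩
  · simp only [Finset.coe_union, Finset.coe_image, Set.union_subset_iff, Set.image_subset_iff]
    exact ⟨fun x hx => hU₁ x (hs₁U hx), fun y hy => hlift y (hs₂U hy)⟩
  · rw [← sub_add_cancel v w, ← hvw]
    refine add_mem (span_mono ?_ (apply_mem_span_image_of_mem_span ext₀ hv₁))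
      (sum_mem fun y hy => smul_mem _ _ (subset_span ?_))
    · simp only [Finset.coe_union, Finset.coe_image]
      exact Set.subset_union_left
    · simp only [Finset.coe_union, Finset.coe_image]
      exact Or.inr ⟨y, hy, rfl⟩

end Covering

section Radius

variable {K L ι : Type*} [Field K] [Field L] [Algebra K L] {U : Submodule K (ι → L)} {r : ℕ}

variable (K) in
/-- The exact covering radius. It is the junk value `sInf ∅ = 0` unless `U` covers with some
radius, i.e. unless `U` spans. -/
noncomputable def rkCovRadius (U : Submodule K (ι → L)) : ℕ :=
  sInf {r | RkCovers K U r}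

theorem RkCovers.rkCovRadius_le (h : RkCovers K U r) : rkCovRadius K U ≤ r :=
  Nat.sInf_le h

theorem RkCovers.rkCovers_rkCovRadius (h : RkCovers K U r) : RkCovers K U (rkCovRadius K U) :=
  Nat.sInf_mem (s := {r | RkCovers K U r}) ⟨r, h⟩

theorem RkCovers.isRankSat_rkCovRadius (h : RkCovers K U r) : IsRankSat K U (rkCovRadius K U) :=
  ⟨h.rkCovers_rkCovRadius, fun _ hs => Nat.notMem_of_lt_sInf hs⟩

variable [Finite ι] [Finite L]

theorem rkCovRadius_sup_span_singleton_le {X : Submodule K (ι → L)}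
    (hX : span L (X : Set (ι → L)) = ⊤) {y : ι → L} (hy : y ∈ X) (t : ι → L) (c : L) :
    rkCovRadius K (X ⊔ span K {t}) ≤ rkCovRadius K (X ⊔ span K {t + c • y}) + 1 := by
  have hcov := rkCovers_finrank_of_span_eq_top (span_eq_top_of_le hX
    (le_sup_left : X ≤ X ⊔ span K {t + c • y}))
  refine (hcov.rkCovers_rkCovRadius.add_one_of_forall_exists_sub_smul_mem
    (mem_sup_left hy) fun g hg => ?_).rkCovRadius_le
  obtain ⟨x, hx, z, hz, rfl⟩ := mem_sup.1 hg
  obtain ⟨a, rfl⟩ := mem_span_singleton.1 hz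
  refine ⟨a • c, ?_⟩
  rw [show x + a • (t + c • y) - (a • c) • y = x + a • t by rw [smul_add, smul_assoc]; abel]
  exact add_mem (mem_sup_left hx) (mem_sup_right (smul_mem _ _ (mem_span_singleton_self t)))

theorem exists_rkCovRadius_sup_span_singleton_eq {X : Submodule K (ι → L)}
    (hX : span L (X : Set (ι → L)) = ⊤) {u : ι → L} {ρ : ℕ}
    (hu : rkCovRadius K (X ⊔ span K {u}) ≤ ρ) (hρ : ρ ≤ rkCovRadius K X) :
    ∃ t, rkCovRadius K (X ⊔ span K {t}) = ρ := by
  classical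
  obtain ⟨c, s, hsX, -, hcs⟩ :=
    mem_span_iff_exists_finset_subset.1 (hX ▸ mem_top : u ∈ span L (X : Set (ι → L)))
  -- Walk from `u` to `u - ∑ y ∈ s, c y • y = 0`, removing one term at a time.
  suffices key : ∀ s' : Finset (ι → L), ↑s' ⊆ (X : Set (ι → L)) → ∀ t,
      rkCovRadius K (X ⊔ span K {t}) ≤ ρ →
      ρ ≤ rkCovRadius K (X ⊔ span K {t - ∑ y ∈ s', c y • y}) →
      ∃ t', rkCovRadius K (X ⊔ span K {t'}) = ρ by
    exact key s hsX u hu (by simpa [hcs] using hρ)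
  intro s'
  induction s' using Finset.induction_on with
  | empty => exact fun _ t h₁ h₂ => ⟨t, le_antisymm h₁ (by simpa using h₂)⟩
  | insert a s' ha ih =>
    intro hs t h₁ h₂
    rw [Finset.coe_insert, Set.insert_subset_iff] at hs
    by_cases h : rkCovRadius K (X ⊔ span K {t - c a • a}) ≤ ρ
    · exact ih hs.2 _ h (by rwa [Finset.sum_insert ha, ← sub_sub] at h₂)
    · have := rkCovRadius_sup_span_singleton_le hX hs.1 (t - c a • a) (c a)
      rw [sub_add_cancel] at this
      exact ⟨t, le_antisymm h₁ (by omega)⟩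

theorem exists_rkCovRadius_eq_of_le {X₀ X : Submodule K (ι → L)} {ρ : ℕ}
    (hX₀ : span L (X₀ : Set (ι → L)) = ⊤) (hρ : ρ ≤ rkCovRadius K X₀) (hX₀X : X₀ ≤ X)
    (hX : rkCovRadius K X ≤ ρ) :
    ∃ Z : Submodule K (ι → L), span L (Z : Set (ι → L)) = ⊤ ∧
      finrank K Z ≤ finrank K X ∧ rkCovRadius K Z = ρ := by
  classical
  suffices key : ∀ s : Finset (ι → L), rkCovRadius K (X₀ ⊔ span K (s : Set (ι → L))) ≤ ρ →
      ∃ Z : Submodule K (ι → L), span L (Z : Set (ι → L)) = ⊤ ∧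
        finrank K Z ≤ finrank K ↥(X₀ ⊔ span K (s : Set (ι → L))) ∧ rkCovRadius K Z = ρ by
    have hX' : X₀ ⊔ span K ↑(Set.toFinite (X : Set (ι → L))).toFinset = X := by
      simpa using hX₀X
    have := key _ (hX'.symm ▸ hX)
    rwa [hX'] at this
  intro s
  induction s using Finset.induction_on with
  | empty =>
    exact fun h => ⟨X₀, hX₀, finrank_mono le_sup_left, le_antisymm (by simpa using h) hρ⟩
  | insert u s hu ih =>
    intro h
    rw [Finset.coe_insert, span_insert, sup_comm (span K {u}), ← sup_assoc] at h ⊢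
    set X' := X₀ ⊔ span K (s : Set (ι → L))
    by_cases h' : rkCovRadius K X' ≤ ρ
    · obtain ⟨Z, hZ, hZX', hZρ⟩ := ih h'
      exact ⟨Z, hZ, hZX'.trans (finrank_mono le_sup_left), hZρ⟩
    · have hX' := span_eq_top_of_le hX₀ (le_sup_left : X₀ ≤ X')
      have huX' : u ∉ X' := fun hu' => h' <| by
        rwa [sup_eq_left.2 ((span_singleton_le_iff_mem _ _).2 hu')] at h
      obtain ⟨t, ht⟩ := exists_rkCovRadius_sup_span_singleton_eq hX' h (not_le.1 h').le
      refine ⟨X' ⊔ span K {t}, span_eq_top_of_le hX' le_sup_left, ?_, ht⟩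
      rw [finrank_sup_span_singleton huX']
      grw [finrank_add_le_finrank_add_finrank]
      simpa using finrank_span_le_card (R := K) ({t} : Set (ι → L))

end Radius

section Basis

variable {K L : Type*} [Field K] [Field L] [Algebra K L]

theorem Module.Basis.repr_mem_range_algebraMap {η M : Type*} [AddCommGroup M] [Module L M]
    [Module K M] [IsScalarTower K L M] (b : Basis η L M) {x : M}
    (hx : x ∈ span K (Set.range b)) (i : η) : b.repr x i ∈ Set.range (algebraMap K L) := by
  classical
  induction hx using Submodule.span_induction with
  | mem _ h =>
    obtain ⟨j, rfl⟩ := h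
    rw [b.repr_self_apply]
    split_ifs
    exacts [⟨1, map_one _⟩, ⟨0, map_zero _⟩]
  | zero => exact ⟨0, by simp⟩
  | add x y _ _ hx hy =>
    obtain ⟨a, ha⟩ := hx
    obtain ⟨c, hc⟩ := hy
    exact ⟨a + c, by simp [ha, hc]⟩
  | smul a x _ hx =>
    obtain ⟨c, hc⟩ := hx
    exact ⟨a * c, by rw [← algebraMap_smul L a x, map_smul, Finsupp.smul_apply, smul_eq_mul,
      ← hc, map_mul]⟩

theorem Module.Basis.repr_sum_mem_span {η M : Type*} [AddCommGroup M] [Module L M]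
    [Module K M] [IsScalarTower K L M] (b : Basis η L M) {s : Finset M}
    (hs : ↑s ⊆ (span K (Set.range b) : Set M)) (f : M → L) (i : η) :
    b.repr (∑ g ∈ s, f g • g) i ∈ span K (f '' s) := by
  rw [map_sum, Finsupp.finsetSum_apply]
  refine sum_mem fun g hg => ?_
  obtain ⟨a, ha⟩ := b.repr_mem_range_algebraMap (hs hg) i
  rw [map_smul, Finsupp.smul_apply, ← ha, smul_eq_mul, mul_comm, ← Algebra.smul_def]
  exact smul_mem _ _ (subset_span ⟨g, hg, rfl⟩)

theorem Module.Basis.min_card_finrank_le_of_rkCovers {η ι : Type*} [Fintype η] [Finite ι]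
    [Finite L] (b : Basis η L (ι → L)) {r : ℕ} (h : RkCovers K (span K (Set.range b)) r) :
    min (Fintype.card η) (finrank K L) ≤ r := by
  classical
  set m := min (Fintype.card η) (finrank K L)
  let e : Fin m ↪ η :=
    (Fin.castLEEmb (min_le_left _ _)).trans (Fintype.equivFin η).symm.toEmbedding
  let c : Fin m → L := fun i => Module.finBasis K L (Fin.castLE (min_le_right _ _) i)
  have hc : LinearIndependent K c :=
    (Module.finBasis K L).linearIndependent.comp _ (Fin.castLE_injective _)
  obtain ⟨s, hsr, hsB, hv⟩ :=
    rkCovers_iff_exists_finset.1 h (b.equivFun.symm (Function.extend e c 0))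
  obtain ⟨f, -, hf⟩ := mem_span_finset.1 hv
  have hcf : ∀ i, c i ∈ span K (f '' s) := fun i => by
    have := b.repr_sum_mem_span hsB f (e i)
    rwa [hf, ← b.equivFun_apply, b.equivFun.apply_symm_apply, e.injective.extend_apply] at this
  calc m = finrank K (span K (Set.range c)) := by rw [finrank_span_eq_card hc, Fintype.card_fin]
    _ ≤ finrank K (span K (f '' s)) := finrank_mono (span_le.2 (Set.range_subset_iff.2 hcf))
    _ ≤ s.card := by
      rw [← Finset.coe_image]
      exact (finrank_span_finset_le_card _).trans Finset.card_image_le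
    _ ≤ r := hsr

end Basis

section Saturating

variable {K L : Type*} [Field K] [Field L] [Algebra K L]

theorem exists_finrank_eq_sMin {k ρ : ℕ}
    (h : ∃ U : Submodule K (Fin k → L), span L (U : Set (Fin k → L)) = ⊤ ∧ IsRankSat K U ρ) :
    ∃ U : Submodule K (Fin k → L), finrank K U = sMin K L k ρ ∧
      span L (U : Set (Fin k → L)) = ⊤ ∧ IsRankSat K U ρ := by
  obtain ⟨U, hU⟩ := h
  exact Nat.sInf_mem (s := {n | ∃ U : Submodule K (Fin k → L), finrank K U = n ∧
    span L (U : Set (Fin k → L)) = ⊤ ∧ IsRankSat K U ρ}) ⟨_, U, rfl, hU⟩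

variable [Finite L]

theorem exists_isRankSat_finrank_le {ι : Type*} [Fintype ι] {Y : Submodule K (ι → L)} {ρ : ℕ}
    (hY : RkCovers K Y ρ) (hρ : ρ ≤ min (Fintype.card ι) (finrank K L)) :
    ∃ Z : Submodule K (ι → L), span L (Z : Set (ι → L)) = ⊤ ∧
      finrank K Z ≤ finrank K Y ∧ IsRankSat K Z ρ := by
  obtain ⟨t, htY, htspan, hli⟩ := exists_linearIndependent L (Y : Set (ι → L))
  rw [hY.span_eq_top] at htspan
  have : Fintype t := Fintype.ofFinite t
  let b := Basis.mk hli (by rw [Subtype.range_coe, htspan])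
  have hb : Set.range b = t := by rw [Basis.coe_mk, Subtype.range_coe]
  have hB : span L (span K t : Set (ι → L)) = ⊤ := by rw [span_span_of_tower, htspan]
  have hBρ : ρ ≤ rkCovRadius K (span K t) := by
    have := b.min_card_finrank_le_of_rkCovers
      (hb ▸ (rkCovers_finrank_of_span_eq_top hB).rkCovers_rkCovRadius)
    rw [← finrank_eq_card_basis b, finrank_fintype_fun_eq_card, hb] at this
    exact hρ.trans this
  obtain ⟨Z, hZ, hZY, hZρ⟩ :=
    exists_rkCovRadius_eq_of_le hB hBρ (span_le.2 htY) hY.rkCovRadius_le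
  exact ⟨Z, hZ, hZY, hZρ ▸ (rkCovers_finrank_of_span_eq_top hZ).isRankSat_rkCovRadius⟩

theorem sMin_le_finrank {ι : Type*} [Fintype ι] {U : Submodule K (ι → L)} {ρ : ℕ}
    (hU : RkCovers K U ρ) (hρ : ρ ≤ min (Fintype.card ι) (finrank K L)) :
    sMin K L (Fintype.card ι) ρ ≤ finrank K U := by
  let e : (ι → L) ≃ₗ[L] (Fin (Fintype.card ι) → L) :=
    LinearEquiv.funCongrLeft L L (Fintype.equivFin ι).symm
  obtain ⟨Z, hZ, hZU, hZρ⟩ :=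
    exists_isRankSat_finrank_le (hU.map (e := e.toLinearMap) e.surjective) (by simpa using hρ)
  unfold sMin
  refine (Nat.sInf_le ?_).trans (hZU.trans (LinearEquiv.finrank_map_eq (e.restrictScalars K) U).le)
  exact ⟨Z, rfl, hZ, hZρ⟩

end Saturating

section BlockTriangular

variable {R M l m n o : Type*} [Ring R] [AddCommGroup M] [Module R M]
  (A : Matrix l n M) (B : Matrix l o M) (D : Matrix m o M)

theorem Matrix.transpose_fromBlocks_zero₂₁_inl (j : n) :
    (fromBlocks A B 0 D)ᵀ (Sum.inl j) = Sum.elim (Aᵀ j) 0 := by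
  ext (i | i) <;> rfl

theorem Matrix.transpose_fromBlocks_zero₂₁_inr (j : o) :
    (fromBlocks A B 0 D)ᵀ (Sum.inr j) = Sum.elim (Bᵀ j) (Dᵀ j) := by
  ext (i | i) <;> rfl

variable {A D}

theorem Matrix.linearIndependent_transpose_fromBlocks_zero₂₁ [Fintype n] [Fintype o]
    (hA : LinearIndependent R fun j => Aᵀ j) (hD : LinearIndependent R fun j => Dᵀ j) :
    LinearIndependent R fun j => (fromBlocks A B 0 D)ᵀ j := by
  rw [Fintype.linearIndependent_iff] at hA hD ⊢
  intro g hg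
  have hinr : ∀ j, g (Sum.inr j) = 0 := hD _ <| funext fun i => by
    simpa [Fintype.sum_sum_type, Finset.sum_apply, transpose_fromBlocks_zero₂₁_inl,
      transpose_fromBlocks_zero₂₁_inr] using congrFun hg (Sum.inr i)
  have hinl : ∀ j, g (Sum.inl j) = 0 := hA _ <| funext fun i => by
    simpa [Fintype.sum_sum_type, Finset.sum_apply, transpose_fromBlocks_zero₂₁_inl, hinr]
      using congrFun hg (Sum.inl i)
  exact Sum.rec hinl hinr

theorem Matrix.sumElim_zero_mem_span_transpose_fromBlocks {x : l → M}
    (hx : x ∈ span R (Set.range fun j => Aᵀ j)) :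
    Sum.elim x 0 ∈ span R (Set.range fun j => (fromBlocks A B 0 D)ᵀ j) := by
  induction hx using Submodule.span_induction with
  | mem _ h =>
    obtain ⟨j, rfl⟩ := h
    exact subset_span ⟨Sum.inl j, transpose_fromBlocks_zero₂₁_inl A B D j⟩
  | zero => simp
  | add x y _ _ hx hy => simpa [← Sum.elim_add_add] using add_mem hx hy
  | smul a x _ hx =>
    convert smul_mem _ a hx using 1
    ext (i | i) <;> simp

theorem Matrix.exists_sumElim_mem_span_transpose_fromBlocks {y : m → M}
    (hy : y ∈ span R (Set.range fun j => Dᵀ j)) :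
    ∃ x, Sum.elim x y ∈ span R (Set.range fun j => (fromBlocks A B 0 D)ᵀ j) := by
  induction hy using Submodule.span_induction with
  | mem _ h =>
    obtain ⟨j, rfl⟩ := h
    exact ⟨Bᵀ j, subset_span ⟨Sum.inr j, transpose_fromBlocks_zero₂₁_inr A B D j⟩⟩
  | zero => exact ⟨0, by simp⟩
  | add y z _ _ hy hz =>
    obtain ⟨x, hx⟩ := hy
    obtain ⟨w, hw⟩ := hz
    exact ⟨x + w, by simpa [← Sum.elim_add_add] using add_mem hx hw⟩
  | smul a y _ hy =>
    obtain ⟨x, hx⟩ := hy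
    refine ⟨a • x, ?_⟩
    convert smul_mem _ a hx using 1
    ext (i | i) <;> simp

end BlockTriangular

theorem sMin_add_le {K L : Type*} [Field K] [Field L] [Algebra K L] [Finite L]
    {k₁ k₂ ρ₁ ρ₂ : ℕ}
    (h₁ : ∃ U : Submodule K (Fin k₁ → L), span L (U : Set (Fin k₁ → L)) = ⊤ ∧ IsRankSat K U ρ₁)
    (h₂ : ∃ U : Submodule K (Fin k₂ → L), span L (U : Set (Fin k₂ → L)) = ⊤ ∧ IsRankSat K U ρ₂)
    (hρ : ρ₁ + ρ₂ ≤ min (k₁ + k₂) (finrank K L)) :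
    sMin K L (k₁ + k₂) (ρ₁ + ρ₂) ≤ sMin K L k₁ ρ₁ + sMin K L k₂ ρ₂ := by
  obtain ⟨U₁, hU₁, -, hsat₁⟩ := exists_finrank_eq_sMin h₁
  obtain ⟨U₂, hU₂, -, hsat₂⟩ := exists_finrank_eq_sMin h₂
  let e := (LinearEquiv.sumArrowLequivProdArrow (Fin k₁) (Fin k₂) K L).symm.toLinearMap
  let P := U₁.map (e ∘ₗ LinearMap.inl K _ _) ⊔ U₂.map (e ∘ₗ LinearMap.inr K _ _)
  have hP : RkCovers K P (ρ₁ + ρ₂) := hsat₁.1.of_sumElim hsat₂.1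
    (fun _ hx => mem_sup_left (mem_map_of_mem hx))
    fun _ hy => ⟨0, mem_sup_right (mem_map_of_mem hy)⟩
  have hsMin := sMin_le_finrank hP (by simpa using hρ)
  rw [Fintype.card_sum, Fintype.card_fin, Fintype.card_fin] at hsMin
  rw [← hU₁, ← hU₂]
  grw [hsMin, finrank_add_le_finrank_add_finrank, finrank_map_le, finrank_map_le]

theorem fSum_rankSat_general (K L : Type*) [Field K] [Field L] [Algebra K L]
    [Fintype L] {k₁ k₂ n₁ n₂ ρ₁ ρ₂ : ℕ}
    (G₁ : Matrix (Fin k₁) (Fin n₁) L) (G₂ : Matrix (Fin k₂) (Fin n₂) L)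
    (G' : Matrix (Fin k₁) (Fin n₂) L)
    (hcols₁ : LinearIndependent K (fun j : Fin n₁ => G₁ᵀ j))
    (hcols₂ : LinearIndependent K (fun j : Fin n₂ => G₂ᵀ j))
    (hspan₁ : Submodule.span L
      ((Submodule.span K (Set.range fun j : Fin n₁ => G₁ᵀ j) : Submodule K (Fin k₁ → L)) :
        Set (Fin k₁ → L)) = ⊤)
    (hspan₂ : Submodule.span L
      ((Submodule.span K (Set.range fun j : Fin n₂ => G₂ᵀ j) : Submodule K (Fin k₂ → L)) :
        Set (Fin k₂ → L)) = ⊤)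
    (hsat₁ : IsRankSat K (Submodule.span K (Set.range fun j : Fin n₁ => G₁ᵀ j)) ρ₁)
    (hsat₂ : IsRankSat K (Submodule.span K (Set.range fun j : Fin n₂ => G₂ᵀ j)) ρ₂) :
    (∃ ρ ≤ ρ₁ + ρ₂,
        IsRankSat K (Submodule.span K
          (Set.range fun j : Fin n₁ ⊕ Fin n₂ => (Matrix.fromBlocks G₁ G' 0 G₂)ᵀ j)) ρ ∧
        Module.finrank K (Submodule.span K
          (Set.range fun j : Fin n₁ ⊕ Fin n₂ => (Matrix.fromBlocks G₁ G' 0 G₂)ᵀ j)) =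
            n₁ + n₂ ∧
        Submodule.span L ((Submodule.span K
          (Set.range fun j : Fin n₁ ⊕ Fin n₂ => (Matrix.fromBlocks G₁ G' 0 G₂)ᵀ j) :
            Submodule K ((Fin k₁ ⊕ Fin k₂) → L)) : Set ((Fin k₁ ⊕ Fin k₂) → L)) = ⊤) ∧
      (ρ₁ + ρ₂ ≤ min (k₁ + k₂) (Module.finrank K L) →
        sMin K L (k₁ + k₂) (ρ₁ + ρ₂) ≤ sMin K L k₁ ρ₁ + sMin K L k₂ ρ₂) := by
  have hcov := hsat₁.1.of_sumElim hsat₂.1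
    (fun _ hx => sumElim_zero_mem_span_transpose_fromBlocks G' hx)
    fun _ hy => exists_sumElim_mem_span_transpose_fromBlocks G' hy
  have hfinrank :=
    finrank_span_eq_card (linearIndependent_transpose_fromBlocks_zero₂₁ G' hcols₁ hcols₂)
  refine ⟨⟨_, hcov.rkCovRadius_le, hcov.isRankSat_rkCovRadius, by simpa using hfinrank,
    hcov.span_eq_top⟩, fun hρ => sMin_add_le ⟨_, hspan₁, hsat₁⟩ ⟨_, hspan₂, hsat₂⟩ hρ⟩

/-- Direct sum bound. Let `G₁, G₂` be generator matrices of a rank-`ρ₁`-saturating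
`[n₁,k₁]_{q^m/q}` system and a rank-`ρ₂`-saturating `[n₂,k₂]_{q^m/q}` system, and let
`G'` be an arbitrary `k₁ × n₂` matrix over `F_{q^m}` (encoding an `F_{q^m}`-linear map
`f : F_{q^m}^{n₁} → F_{q^m}^{n₂}`). Then the `f`-sum, i.e. the system generated by the
columns of the block matrix `[[G₁, G'], [0, G₂]]`, is an `[n₁+n₂, k₁+k₂]_{q^m/q}` system
that is rank-`ρ`-saturating for some `ρ ≤ ρ₁ + ρ₂`; and if
`ρ₁ + ρ₂ ≤ min{k₁+k₂, m}`, then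
`s_{q^m/q}(k₁+k₂, ρ₁+ρ₂) ≤ s_{q^m/q}(k₁, ρ₁) + s_{q^m/q}(k₂, ρ₂)`. -/
theorem fSum_rankSat (K L : Type*) [Field K] [Field L] [Algebra K L]
    [Fintype K] [Fintype L] {k₁ k₂ n₁ n₂ ρ₁ ρ₂ : ℕ}
    (G₁ : Matrix (Fin k₁) (Fin n₁) L) (G₂ : Matrix (Fin k₂) (Fin n₂) L)
    (G' : Matrix (Fin k₁) (Fin n₂) L)
    (hcols₁ : LinearIndependent K (fun j : Fin n₁ => G₁ᵀ j))
    (hcols₂ : LinearIndependent K (fun j : Fin n₂ => G₂ᵀ j))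
    (hspan₁ : Submodule.span L
      ((Submodule.span K (Set.range fun j : Fin n₁ => G₁ᵀ j) : Submodule K (Fin k₁ → L)) :
        Set (Fin k₁ → L)) = ⊤)
    (hspan₂ : Submodule.span L
      ((Submodule.span K (Set.range fun j : Fin n₂ => G₂ᵀ j) : Submodule K (Fin k₂ → L)) :
        Set (Fin k₂ → L)) = ⊤)
    (hsat₁ : IsRankSat K (Submodule.span K (Set.range fun j : Fin n₁ => G₁ᵀ j)) ρ₁)
    (hsat₂ : IsRankSat K (Submodule.span K (Set.range fun j : Fin n₂ => G₂ᵀ j)) ρ₂) :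
    (∃ ρ ≤ ρ₁ + ρ₂,
        IsRankSat K (Submodule.span K
          (Set.range fun j : Fin n₁ ⊕ Fin n₂ => (Matrix.fromBlocks G₁ G' 0 G₂)ᵀ j)) ρ ∧
        Module.finrank K (Submodule.span K
          (Set.range fun j : Fin n₁ ⊕ Fin n₂ => (Matrix.fromBlocks G₁ G' 0 G₂)ᵀ j)) =
            n₁ + n₂ ∧
        Submodule.span L ((Submodule.span K
          (Set.range fun j : Fin n₁ ⊕ Fin n₂ => (Matrix.fromBlocks G₁ G' 0 G₂)ᵀ j) :
            Submodule K ((Fin k₁ ⊕ Fin k₂) → L)) : Set ((Fin k₁ ⊕ Fin k₂) → L)) = ⊤) ∧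
      (ρ₁ + ρ₂ ≤ min (k₁ + k₂) (Module.finrank K L) →
        sMin K L (k₁ + k₂) (ρ₁ + ρ₂) ≤ sMin K L k₁ ρ₁ + sMin K L k₂ ρ₂) :=
  fSum_rankSat_general K L G₁ G₂ G' hcols₁ hcols₂ hspan₁ hspan₂ hsat₁ hsat₂
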